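/- arXiv:2103.12646 — 2 statements merged into one kernel-verified Lean document; each statement's English description precedes it below -/
import Mathlib

section
/- Let R₁(s) be a q₁×k polynomial matrix with Smith decomposition R₁(s) = U₁(s)·[D₁(s) 0]·V₁(s), where U₁, V₁ are unimodular and D₁(s) is an invertible diagonal polynomial matrix. Let R₂(s) be a q₂×k polynomial matrix. Then there exists a polynomial matrix M(s) with R₂(s) = M(s)·R₁(s) if and only if (1) R₂(s)·V₁(s)⁻¹·[0; I] = 0, and (2) R₂(s)·V₁(s)⁻¹·[D₁(s)⁻¹; 0] is a polynomial matrix (i.e., each entry of this rational matrix lies in ℝ[s]). -/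
open scoped Matrix

/-- A rational matrix is a polynomial matrix if all its entries are polynomials. -/
def IsPolyMat {ι κ : Type*} (M : Matrix ι κ (RatFunc ℝ)) : Prop :=
  ∀ i j, ∃ p : Polynomial ℝ, M i j = algebraMap (Polynomial ℝ) (RatFunc ℝ) p

/-!
Right multiplication by the unimodular `V₁⁻¹` turns `R₂ = M R₁` into `R₂ V₁⁻¹ = (M U₁) [D₁ 0]`,
and `M ↦ M U₁` is a bijection of polynomial matrices since `U₁⁻¹` is polynomial. So it suffices
to decide when `X := R₂ V₁⁻¹` is a polynomial left multiple of `[D₁ 0]`. Such a multiple has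
zero right block, which is `X [0; I]`; and if the right block vanishes, the only candidate
factor is `X [D₁⁻¹; 0]`, which reproduces `X` after multiplication by `[D₁ 0]`.
-/

open Matrix

theorem IsPolyMat.mul {ι κ ρ : Type*} [Fintype κ] {A : Matrix ι κ (RatFunc ℝ)}
    {B : Matrix κ ρ (RatFunc ℝ)} (hA : IsPolyMat A) (hB : IsPolyMat B) : IsPolyMat (A * B) := by
  choose a ha using hA
  choose b hb using hB
  exact fun i j => ⟨∑ k, a i k * b k j, by simp [mul_apply, ha, hb]⟩

section Partitioned

variable {K ι α β : Type*} [CommRing K] [Fintype α] [Fintype β]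

theorem Matrix.mul_fromRows_zero_one [DecidableEq β] (X : Matrix ι (α ⊕ β) K) :
    X * fromRows (0 : Matrix α β K) (1 : Matrix β β K) = X.toCols₂ := by
  rw [← fromCols_toCols X, fromCols_mul_fromRows]
  simp

variable [DecidableEq α]

theorem Matrix.fromCols_zero_mul_fromRows_nonsing_inv {D : Matrix α α K} (hD : IsUnit D.det) :
    fromCols D (0 : Matrix α β K) * fromRows D⁻¹ (0 : Matrix β α K) = 1 := by
  rw [fromCols_mul_fromRows, mul_nonsing_inv D hD]
  simp

theorem Matrix.mul_fromRows_nonsing_inv_mul_fromCols {D : Matrix α α K} (hD : IsUnit D.det)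
    {X : Matrix ι (α ⊕ β) K} (hX : X.toCols₂ = 0) :
    X * fromRows D⁻¹ (0 : Matrix β α K) * fromCols D (0 : Matrix α β K) = X := by
  obtain ⟨X₁, rfl⟩ : ∃ X₁, X = fromCols X₁ 0 := ⟨X.toCols₁, by rw [← hX, fromCols_toCols]⟩
  rw [fromCols_mul_fromRows, mul_fromCols]
  simp [Matrix.mul_assoc, nonsing_inv_mul D hD]

theorem Matrix.eq_mul_iff_mul_nonsing_inv_eq {n : Type*} [Fintype n] [DecidableEq n]
    {V : Matrix n n K} (hV : IsUnit V.det) (X Y : Matrix ι n K) : X = Y * V ↔ X * V⁻¹ = Y := by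
  constructor
  · rintro rfl
    exact mul_nonsing_inv_cancel_right V Y hV
  · rintro rfl
    exact (nonsing_inv_mul_cancel_right V X hV).symm

end Partitioned

theorem exists_isPolyMat_eq_mul_fromCols_zero_iff {ι α β : Type*} [Fintype α] [Fintype β]
    [DecidableEq α] [DecidableEq β] {D : Matrix α α (RatFunc ℝ)} (hD : IsUnit D.det)
    (X : Matrix ι (α ⊕ β) (RatFunc ℝ)) :
    (∃ N : Matrix ι α (RatFunc ℝ), IsPolyMat N ∧ X = N * fromCols D (0 : Matrix α β (RatFunc ℝ))) ↔
      X * fromRows (0 : Matrix α β (RatFunc ℝ)) (1 : Matrix β β (RatFunc ℝ)) = 0 ∧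
        IsPolyMat (X * fromRows D⁻¹ (0 : Matrix β α (RatFunc ℝ))) := by
  rw [mul_fromRows_zero_one]
  constructor
  · rintro ⟨N, hN, rfl⟩
    refine ⟨by simp, ?_⟩
    rwa [Matrix.mul_assoc, fromCols_zero_mul_fromRows_nonsing_inv hD, Matrix.mul_one]
  · rintro ⟨hX, hpoly⟩
    exact ⟨_, hpoly, (mul_fromRows_nonsing_inv_mul_fromCols hD hX).symm⟩

theorem exists_isPolyMat_eq_mul_mul_iff {ι κ ρ : Type*} [Fintype κ] [DecidableEq κ]
    {U : Matrix κ κ (RatFunc ℝ)} (hU : IsPolyMat U) (hU' : IsPolyMat U⁻¹) (hdet : IsUnit U.det)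
    (X : Matrix ι ρ (RatFunc ℝ)) (A : Matrix κ ρ (RatFunc ℝ)) :
    (∃ M : Matrix ι κ (RatFunc ℝ), IsPolyMat M ∧ X = M * (U * A)) ↔
      ∃ N : Matrix ι κ (RatFunc ℝ), IsPolyMat N ∧ X = N * A := by
  constructor
  · rintro ⟨M, hM, rfl⟩
    exact ⟨M * U, hM.mul hU, (Matrix.mul_assoc _ _ _).symm⟩
  · rintro ⟨N, hN, rfl⟩
    exact ⟨N * U⁻¹, hN.mul hU', by rw [Matrix.mul_assoc, nonsing_inv_mul_cancel_left U A hdet]⟩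

theorem smith_form_divisibility_criterion_general {q₁ q₂ m : ℕ}
    (R₁ : Matrix (Fin q₁) (Fin q₁ ⊕ Fin m) (RatFunc ℝ))
    (R₂ : Matrix (Fin q₂) (Fin q₁ ⊕ Fin m) (RatFunc ℝ))
    (U₁ : Matrix (Fin q₁) (Fin q₁) (RatFunc ℝ))
    (hU₁ : IsPolyMat U₁ ∧ IsPolyMat U₁⁻¹ ∧ IsUnit U₁.det)
    (V₁ : Matrix (Fin q₁ ⊕ Fin m) (Fin q₁ ⊕ Fin m) (RatFunc ℝ))
    (hV₁ : IsPolyMat V₁ ∧ IsPolyMat V₁⁻¹ ∧ IsUnit V₁.det)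
    (D₁ : Matrix (Fin q₁) (Fin q₁) (RatFunc ℝ)) (hD₁det : D₁.det ≠ 0)
    (hSmith : R₁ = U₁ * Matrix.fromCols D₁ 0 * V₁) :
    (∃ M : Matrix (Fin q₂) (Fin q₁) (RatFunc ℝ), IsPolyMat M ∧ R₂ = M * R₁) ↔
      (R₂ * V₁⁻¹ * Matrix.fromRows (0 : Matrix (Fin q₁) (Fin m) (RatFunc ℝ)) (1 : Matrix (Fin m) (Fin m) (RatFunc ℝ)) = 0 ∧
       IsPolyMat (R₂ * V₁⁻¹ * Matrix.fromRows D₁⁻¹ (0 : Matrix (Fin m) (Fin q₁) (RatFunc ℝ)))) := by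
  obtain ⟨hU, hU', hUdet⟩ := hU₁
  -- `hSmith` is elaborated with `CStarMatrix`'s product instance; restate it with `Matrix`'s.
  replace hSmith : R₁ = U₁ * fromCols D₁ (0 : Matrix (Fin q₁) (Fin m) (RatFunc ℝ)) * V₁ := hSmith
  have hcancelV : ∀ M : Matrix (Fin q₂) (Fin q₁) (RatFunc ℝ), R₂ = M * R₁ ↔
      R₂ * V₁⁻¹ = M * (U₁ * fromCols D₁ (0 : Matrix (Fin q₁) (Fin m) (RatFunc ℝ))) := fun M => by
    rw [hSmith, ← Matrix.mul_assoc, eq_mul_iff_mul_nonsing_inv_eq hV₁.2.2]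
  simp only [hcancelV]
  rw [exists_isPolyMat_eq_mul_mul_iff hU hU' hUdet,
    exists_isPolyMat_eq_mul_fromCols_zero_iff (isUnit_iff_ne_zero.mpr hD₁det)]

/-- Smith-form criterion for left divisibility of polynomial matrices (Lemma 1):
`R₂ = M·R₁` for a polynomial matrix `M` iff `R₂·V₁⁻¹·[0; I] = 0` and
`R₂·V₁⁻¹·[D₁⁻¹; 0]` is a polynomial matrix. -/
theorem smith_form_divisibility_criterion {q₁ q₂ m : ℕ}
    (R₁ : Matrix (Fin q₁) (Fin q₁ ⊕ Fin m) (RatFunc ℝ))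
    (R₂ : Matrix (Fin q₂) (Fin q₁ ⊕ Fin m) (RatFunc ℝ))
    (hR₁ : IsPolyMat R₁) (hR₂ : IsPolyMat R₂)
    (U₁ : Matrix (Fin q₁) (Fin q₁) (RatFunc ℝ))
    (hU₁ : IsPolyMat U₁ ∧ IsPolyMat U₁⁻¹ ∧ IsUnit U₁.det)
    (V₁ : Matrix (Fin q₁ ⊕ Fin m) (Fin q₁ ⊕ Fin m) (RatFunc ℝ))
    (hV₁ : IsPolyMat V₁ ∧ IsPolyMat V₁⁻¹ ∧ IsUnit V₁.det)
    (D₁ : Matrix (Fin q₁) (Fin q₁) (RatFunc ℝ)) (d : Fin q₁ → RatFunc ℝ)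
    (hD₁ : D₁ = Matrix.diagonal d) (hD₁poly : IsPolyMat D₁) (hD₁det : D₁.det ≠ 0)
    (hSmith : R₁ = U₁ * Matrix.fromCols D₁ 0 * V₁) :
    (∃ M : Matrix (Fin q₂) (Fin q₁) (RatFunc ℝ), IsPolyMat M ∧ R₂ = M * R₁) ↔
      (R₂ * V₁⁻¹ * Matrix.fromRows (0 : Matrix (Fin q₁) (Fin m) (RatFunc ℝ)) (1 : Matrix (Fin m) (Fin m) (RatFunc ℝ)) = 0 ∧
       IsPolyMat (R₂ * V₁⁻¹ * Matrix.fromRows D₁⁻¹ (0 : Matrix (Fin m) (Fin q₁) (RatFunc ℝ)))) :=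
  smith_form_divisibility_criterion_general R₁ R₂ U₁ hU₁ V₁ hV₁ D₁ hD₁det hSmith
end

section
/- (Scalar instance of the behaviour-inclusion theorem) Let p₁, p₂ ∈ ℝ[s] with p₁ ≠ 0. The solution space of p₁(d/dt)y = 0 (smooth real-valued functions) is contained in the solution space of p₂(d/dt)y = 0 if and only if p₁ divides p₂ in ℝ[s]. -/
noncomputable def polyOp (p : Polynomial ℝ) (f : ℝ → ℝ) : ℝ → ℝ :=
  fun t => ∑ i ∈ Finset.range (p.natDegree + 1), p.coeff i * iteratedDeriv i f t

/-- Smooth solutions of the scalar ODE `p(d/dt) y = 0`. -/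
def solSet (p : Polynomial ℝ) : Set (ℝ → ℝ) :=
  {y | ContDiff ℝ (⊤ : ℕ∞) y ∧ ∀ t, polyOp p y t = 0}

open Polynomial

lemma polyOp_eq_sum_range {p : Polynomial ℝ} {N : ℕ} (hN : p.natDegree < N) (f : ℝ → ℝ)
    (t : ℝ) : polyOp p f t = ∑ i ∈ Finset.range N, p.coeff i * iteratedDeriv i f t := by
  refine Finset.sum_subset (Finset.range_subset_range.2 hN) ?_
  intro i hi hni
  simp only [Finset.mem_range, not_lt] at hni
  rw [Polynomial.coeff_eq_zero_of_natDegree_lt (by omega), zero_mul]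

lemma polyOp_add (p q : Polynomial ℝ) (f : ℝ → ℝ) (t : ℝ) :
    polyOp (p + q) f t = polyOp p f t + polyOp q f t := by
  rw [polyOp_eq_sum_range (N := max p.natDegree q.natDegree + 1)
        (Nat.lt_succ_of_le ((p.natDegree_add_le q).trans le_rfl)),
      polyOp_eq_sum_range (N := max p.natDegree q.natDegree + 1)
        (Nat.lt_succ_of_le (le_max_left _ _)),
      polyOp_eq_sum_range (N := max p.natDegree q.natDegree + 1)
        (Nat.lt_succ_of_le (le_max_right _ _)),
      ← Finset.sum_add_distrib]
  simp [coeff_add, add_mul]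

lemma polyOp_C_mul (a : ℝ) (p : Polynomial ℝ) (f : ℝ → ℝ) (t : ℝ) :
    polyOp (C a * p) f t = a * polyOp p f t := by
  rw [polyOp_eq_sum_range (N := p.natDegree + 1) (Nat.lt_succ_of_le (natDegree_C_mul_le a p)),
      polyOp, Finset.mul_sum]
  simp [coeff_C_mul, mul_assoc]

lemma polyOp_C (a : ℝ) (g : ℝ → ℝ) (t : ℝ) : polyOp (C a) g t = a * g t := by
  simp [polyOp]

lemma polyOp_X_mul (p : Polynomial ℝ) (f : ℝ → ℝ) (t : ℝ) :
    polyOp (X * p) f t = polyOp p (deriv f) t := by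
  have hdeg : (X * p).natDegree < p.natDegree + 2 := by
    have := natDegree_mul_le (p := (X : Polynomial ℝ)) (q := p)
    exact Nat.lt_succ_of_le (this.trans (by simp only [natDegree_X]; omega : X.natDegree + p.natDegree ≤ p.natDegree + 1))
  rw [polyOp_eq_sum_range hdeg, Finset.sum_range_succ']
  have h0 : (X * p).coeff 0 = 0 := by simp [mul_coeff_zero]
  simp only [h0, zero_mul, add_zero, coeff_X_mul]
  unfold polyOp
  refine Finset.sum_congr rfl fun k _ => ?_
  rw [iteratedDeriv_succ']

lemma polyOp_zero_fun (p : Polynomial ℝ) (t : ℝ) : polyOp p (fun _ => (0 : ℝ)) t = 0 := by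
  have hz : ∀ k : ℕ, iteratedDeriv k (fun _ : ℝ => (0 : ℝ)) = fun _ => (0 : ℝ) := by
    intro k
    induction k with
    | zero => simp
    | succ k ih => rw [iteratedDeriv_succ, ih]; simp
  unfold polyOp
  simp [hz]

lemma contDiff_top_deriv {f : ℝ → ℝ} (hf : ContDiff ℝ (⊤ : ℕ∞) f) : ContDiff ℝ (⊤ : ℕ∞) (deriv f) := by
  exact (contDiff_infty_iff_deriv.1 hf).2

lemma hasDerivAt_polyOp (p : Polynomial ℝ) {f : ℝ → ℝ} (hf : ContDiff ℝ (⊤ : ℕ∞) f) (t : ℝ) :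
    HasDerivAt (polyOp p f) (polyOp p (deriv f) t) t := by
  have key : ∀ i : ℕ, HasDerivAt (iteratedDeriv i f) (iteratedDeriv i (deriv f) t) t := by
    intro i
    have h1 : Differentiable ℝ (iteratedDeriv i f) :=
      hf.differentiable_iteratedDeriv i (by exact_mod_cast lt_top_iff_ne_top.2 (by simp))
    have e : deriv (iteratedDeriv i f) = iteratedDeriv i (deriv f) := by
      rw [← iteratedDeriv_succ, iteratedDeriv_succ']
    have := (h1 t).hasDerivAt
    rwa [e] at this
  unfold polyOp
  exact HasDerivAt.fun_sum fun i _ => (key i).const_mul _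

lemma deriv_polyOp (p : Polynomial ℝ) {f : ℝ → ℝ} (hf : ContDiff ℝ (⊤ : ℕ∞) f) :
    deriv (polyOp p f) = polyOp p (deriv f) :=
  funext fun t => (hasDerivAt_polyOp p hf t).deriv

lemma polyOp_mul (q p : Polynomial ℝ) : ∀ {f : ℝ → ℝ}, ContDiff ℝ (⊤ : ℕ∞) f →
    ∀ t, polyOp (p * q) f t = polyOp p (polyOp q f) t := by
  induction p using Polynomial.induction_on with
  | C a => intro f hf t; rw [polyOp_C_mul, polyOp_C]
  | add p r hp hr =>
    intro f hf t
    rw [add_mul, polyOp_add, polyOp_add, hp hf t, hr hf t]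
  | monomial n a ih =>
    intro f hf t
    have hXw : C a * X ^ (n + 1) * q = X * (C a * X ^ n * q) := by ring
    rw [hXw, polyOp_X_mul, ih (contDiff_top_deriv hf) t, ← deriv_polyOp q hf,
        ← polyOp_X_mul]
    have hX : X * (C a * X ^ n) = C a * X ^ (n + 1) := by ring
    rw [hX]


section MatrixWitness

open NormedSpace

variable {d : ℕ}

lemma aux_iteratedDeriv_exp_entry (M : Matrix (Fin d) (Fin d) ℝ) (i j : Fin d) (k : ℕ) :
    iteratedDeriv k (fun t : ℝ => (exp (t • M)) i j)
      = fun t : ℝ => (M ^ k * exp (t • M)) i j := by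
  letI : SeminormedRing (Matrix (Fin d) (Fin d) ℝ) := Matrix.linftyOpSemiNormedRing
  letI : NormedRing (Matrix (Fin d) (Fin d) ℝ) := Matrix.linftyOpNormedRing
  letI : NormedAlgebra ℝ (Matrix (Fin d) (Fin d) ℝ) := Matrix.linftyOpNormedAlgebra
  haveI : CompleteSpace (Matrix (Fin d) (Fin d) ℝ) := FiniteDimensional.complete ℝ _
  induction k with
  | zero => funext t; simp
  | succ k ih =>
    funext t
    rw [iteratedDeriv_succ, ih]
    have h1 : HasDerivAt (fun u : ℝ => exp (u • M)) (M * exp (t • M)) t :=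
      hasDerivAt_exp_smul_const' M t
    have h2 : HasDerivAt (fun u : ℝ => M ^ k * exp (u • M))
        (M ^ k * (M * exp (t • M))) t := h1.const_mul _
    have h3 : HasDerivAt (fun u : ℝ => (M ^ k * exp (u • M)) i j)
        ((Matrix.entryLinearMap ℝ ℝ i j).toContinuousLinearMap
          (M ^ k * (M * exp (t • M)))) t :=
      (Matrix.entryLinearMap ℝ ℝ i j).toContinuousLinearMap.hasFDerivAt.comp_hasDerivAt t h2
    have h4 : HasDerivAt (fun u : ℝ => (M ^ k * exp (u • M)) i j)
        ((M ^ (k + 1) * exp (t • M)) i j) t := by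
      simpa [pow_succ, mul_assoc] using h3
    exact h4.deriv

lemma aux_contDiff_exp_entry (M : Matrix (Fin d) (Fin d) ℝ) (i j : Fin d) :
    ContDiff ℝ (⊤ : ℕ∞) (fun t : ℝ => (exp (t • M)) i j) := by
  letI : SeminormedRing (Matrix (Fin d) (Fin d) ℝ) := Matrix.linftyOpSemiNormedRing
  letI : NormedRing (Matrix (Fin d) (Fin d) ℝ) := Matrix.linftyOpNormedRing
  letI : NormedAlgebra ℝ (Matrix (Fin d) (Fin d) ℝ) := Matrix.linftyOpNormedAlgebra
  haveI : CompleteSpace (Matrix (Fin d) (Fin d) ℝ) := FiniteDimensional.complete ℝ _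
  apply AnalyticOnNhd.contDiff (𝕜 := ℝ)
  intro t _
  have h1 : AnalyticAt ℝ (exp (𝔸 := Matrix (Fin d) (Fin d) ℝ)) (t • M) :=
    NormedSpace.exp_analytic _
  have h2 : AnalyticAt ℝ (fun u : ℝ => u • M) t := by
    have := ((1 : ℝ →L[ℝ] ℝ).smulRight M).analyticAt t
    convert this using 1; funext u; rfl
  have h3 : AnalyticAt ℝ (fun N : Matrix (Fin d) (Fin d) ℝ => N i j) (exp (t • M)) :=
    ((Matrix.entryLinearMap ℝ ℝ i j).toContinuousLinearMap).analyticAt _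
  have h12 : AnalyticAt ℝ (fun u : ℝ => exp (u • M)) t :=
    AnalyticAt.comp (f := fun u : ℝ => u • M) h1 h2
  exact AnalyticAt.comp (g := fun N : Matrix (Fin d) (Fin d) ℝ => N i j)
    (f := fun u : ℝ => exp (u • M)) h3 h12

lemma aux_polyOp_exp_entry (M : Matrix (Fin d) (Fin d) ℝ) (i j : Fin d)
    (p : Polynomial ℝ) (t : ℝ) :
    polyOp p (fun t : ℝ => (exp (t • M)) i j) t
      = ((Polynomial.aeval M p) * exp (t • M)) i j := by
  rw [Polynomial.aeval_eq_sum_range, Finset.sum_mul, Matrix.sum_apply]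
  unfold polyOp
  refine Finset.sum_congr rfl fun k _ => ?_
  rw [aux_iteratedDeriv_exp_entry M i j k]
  simp [Matrix.smul_mul, Matrix.smul_apply, smul_eq_mul]

end MatrixWitness

theorem scalar_behaviour_inclusion_iff_dvd (p₁ p₂ : Polynomial ℝ) (hp₁ : p₁ ≠ 0) :
    solSet p₁ ⊆ solSet p₂ ↔ p₁ ∣ p₂ := by
  constructor
  · intro h
    by_contra hdvd
    classical
    let A := AdjoinRoot p₁
    let b : PowerBasis ℝ A := AdjoinRoot.powerBasis hp₁
    let e := LinearMap.toMatrixAlgEquiv b.basis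
    let M : Matrix (Fin b.dim) (Fin b.dim) ℝ :=
      e ((Algebra.lmul ℝ A) (AdjoinRoot.root p₁))
    have haeval : ∀ p : Polynomial ℝ,
        Polynomial.aeval M p = e ((Algebra.lmul ℝ A) (AdjoinRoot.mk p₁ p)) := by
      intro p
      show Polynomial.aeval (e ((Algebra.lmul ℝ A) (AdjoinRoot.root p₁))) p = _
      rw [Polynomial.aeval_algHom_apply, Polynomial.aeval_algHom_apply,
        AdjoinRoot.aeval_eq]
    have hM1 : Polynomial.aeval M p₁ = 0 := by
      rw [haeval, AdjoinRoot.mk_self, map_zero, map_zero]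
    have hM2 : Polynomial.aeval M p₂ ≠ 0 := by
      rw [haeval]
      intro h0
      have h1 : (Algebra.lmul ℝ A) (AdjoinRoot.mk p₁ p₂) = 0 := by
        apply e.injective; rw [h0, map_zero]
      have h2 : AdjoinRoot.mk p₁ p₂ = 0 := by
        have h3 := congrArg (fun L : Module.End ℝ A => L 1) h1
        simpa [-AdjoinRoot.mk_eq_zero] using h3
      rw [AdjoinRoot.mk_eq_zero] at h2
      exact hdvd h2
    obtain ⟨i, j, hij⟩ : ∃ i j, Polynomial.aeval M p₂ i j ≠ 0 := by
      by_contra hc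
      push_neg at hc
      exact hM2 (Matrix.ext fun i j => by simpa using hc i j)
    set y : ℝ → ℝ := fun t => (NormedSpace.exp (t • M)) i j with hy
    have hy1 : y ∈ solSet p₁ := by
      refine ⟨aux_contDiff_exp_entry M i j, fun t => ?_⟩
      rw [hy, aux_polyOp_exp_entry, hM1, Matrix.zero_mul, Matrix.zero_apply]
    have hy2 := (h hy1).2 0
    rw [hy, aux_polyOp_exp_entry] at hy2
    rw [zero_smul, NormedSpace.exp_zero, mul_one] at hy2
    exact hij hy2
  · rintro ⟨q, rfl⟩ y hy
    refine ⟨hy.1, fun t => ?_⟩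
    rw [mul_comm, polyOp_mul p₁ q hy.1 t]
    have hz : polyOp p₁ y = fun _ => (0 : ℝ) := funext hy.2
    rw [hz, polyOp_zero_fun]
end
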